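/- arXiv:2103.02467 — 3 statements merged into one kernel-verified Lean document; each statement's English description precedes it below -/
import Mathlib

section
/- Let $M$ be a $k\times n$ real matrix whose rows are orthonormal. For each $i\in[k]$, suppose $|M_{ij}|\le 5^{-k}\sqrt{p}/C$ for all $j$ outside a fixed set $\mathcal{T}\subseteq[n]$, and suppose there exists $i\in[k]$ with $\sum_{j\in\mathcal{T}^c}|M_{ij}|^2\ge 4^{-k}$. Then for $x$ a random vector with i.i.d. $\operatorname{Ber}(p)$ entries and $r=5^{-k}\sqrt{p}/(3C)$, we have $\mathcal{L}(Mx,r)\le 2^{-k}$, where $C$ is the absolute constant in the Kolmogorov–Lévy–Rogozin inequality. -/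
open scoped BigOperators Matrix Matrix.Norms.L2Operator

attribute [local instance] Classical.propDecidable

/-- Probability, under i.i.d. `Ber(p)` coordinates indexed by `ι` (value `1` with
probability `p`, value `0` with probability `1 - p`), of the event `E`. -/
noncomputable def berProb (p : ℝ) {ι : Type*} [Fintype ι] [DecidableEq ι]
    (E : (ι → ℝ) → Prop) : ℝ :=
  ∑ f : ι → Bool,
    (if E (fun i => if f i then 1 else 0) then ∏ i, (if f i then p else 1 - p) else 0)

noncomputable def enorm2 {N : Type*} [Fintype N] (x : N → ℝ) : ℝ :=
  Real.sqrt (∑ i, (x i) ^ 2)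

/-- Lévy concentration function of the `ℝ^N`-valued function `ξ` of i.i.d. `Ber(p)` inputs. -/
noncomputable def levy (p : ℝ) {ι : Type*} [Fintype ι] [DecidableEq ι] {N : Type*} [Fintype N]
    (ξ : (ι → ℝ) → (N → ℝ)) (r : ℝ) : ℝ :=
  ⨆ z : N → ℝ, berProb p (fun v => enorm2 (fun i => ξ v i - z i) ≤ r)

/-!
Only one row of `M` matters: `‖Mx - z‖ ≤ r` forces `|⟨M_i, x⟩ - z_i| ≤ r` for the row `i` with
`∑_{j ∉ T} M_ij² ≥ 4⁻ᵏ`, so it suffices to bound the concentration of the Bernoulli sum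
`X = ∑_j a_j x_j`. This is Esseen's inequality with the kernel `K(u) = sin²u / u²`: `K ≥ 0`,
`K ≥ 1/2` on `[-1/3, 1/3]`, and `K(u) = ∫₀² (1 - t/2) cos(tu) dt`, so
`P(|X - z| ≤ ε/3) ≤ 2 E K((X - z)/ε) ≤ 2 ∫₀² |φ_X(t/ε)| dt`. The characteristic function factors
over the coordinates, and each factor `|1 - p + p e^{iθ}|` with `|θ| ≤ 2` is at most
`exp(-pθ²/16)`; the coordinates outside `T` have `|a_j| ≤ ε`, so `|φ_X(t/ε)|` is bounded by a
Gaussian in `t`, and `2 ∫₀² |φ_X(t/ε)| dt ≤ 8ε √(π / (p ∑_{j ∉ T} a_j²))`.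
-/

open Real
open scoped Complex
open Complex (I)

noncomputable def fejerKernel (u : ℝ) : ℝ := ∫ t in (0 : ℝ)..2, (1 - t / 2) * cos (t * u)

lemma fejerKernel_eq_sin_sq_div_sq {u : ℝ} (hu : u ≠ 0) :
    fejerKernel u = sin u ^ 2 / u ^ 2 := by
  have hderiv : ∀ t ∈ Set.uIcc (0 : ℝ) 2,
      HasDerivAt (fun s => (1 - s / 2) * sin (s * u) / u - cos (s * u) / (2 * u ^ 2))
        ((1 - t / 2) * cos (t * u)) t := by
    intro t _
    have hlin : HasDerivAt (fun s : ℝ => 1 - s / 2) (-(1 / 2)) t := by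
      simpa using ((hasDerivAt_id t).div_const 2).const_sub 1
    have hsin := (hasDerivAt_sin (t * u)).comp t ((hasDerivAt_id t).mul_const u)
    have hcos := (hasDerivAt_cos (t * u)).comp t ((hasDerivAt_id t).mul_const u)
    refine (((hlin.mul hsin).div_const u).sub (hcos.div_const (2 * u ^ 2))).congr_deriv ?_
    simp only [id, Function.comp_apply]
    field_simp
    ring
  rw [fejerKernel, intervalIntegral.integral_eq_sub_of_hasDerivAt hderiv
    (Continuous.intervalIntegrable (by fun_prop) 0 2), cos_two_mul, sin_sq]
  simp only [zero_mul, sin_zero, cos_zero]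
  field_simp
  ring

lemma fejerKernel_zero : fejerKernel 0 = 1 := by
  simp [fejerKernel, intervalIntegral.integral_div]
  norm_num

lemma fejerKernel_nonneg (u : ℝ) : 0 ≤ fejerKernel u := by
  rcases eq_or_ne u 0 with rfl | hu
  · simp [fejerKernel_zero]
  · rw [fejerKernel_eq_sin_sq_div_sq hu]; positivity

lemma one_half_le_fejerKernel {u : ℝ} (hu : |u| ≤ 1 / 3) : 1 / 2 ≤ fejerKernel u := by
  rcases eq_or_ne u 0 with rfl | hu0
  · norm_num [fejerKernel_zero]
  have hsin : |u| * (53 / 54) ≤ |sin u| := by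
    have hu2 : |u| ^ 2 ≤ 1 / 9 := by nlinarith [abs_nonneg u]
    nlinarith [abs_sub_sin_le u, abs_sub_abs_le_abs_sub u (sin u),
      mul_le_mul_of_nonneg_left hu2 (abs_nonneg u)]
  rw [fejerKernel_eq_sin_sq_div_sq hu0, le_div_iff₀ (by positivity), ← sq_abs (sin u),
    ← sq_abs u]
  nlinarith [mul_le_mul hsin hsin (by positivity) (abs_nonneg _), abs_nonneg u]

lemma norm_sum_mul_exp_sub {α : Type*} [Fintype α] (c : α → ℂ) (X : α → ℝ) (s z : ℝ) :
    ‖∑ a, c a * cexp (↑(s * (X a - z)) * I)‖ = ‖∑ a, c a * cexp (↑(s * X a) * I)‖ := by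
  have hshift : ∀ a, cexp (↑(s * (X a - z)) * I)
      = cexp (↑(-(s * z)) * I) * cexp (↑(s * X a) * I) := by
    intro a
    rw [← Complex.exp_add]
    push_cast
    ring_nf
  simp_rw [hshift, mul_left_comm _ (cexp _), ← Finset.mul_sum, norm_mul,
    Complex.norm_exp_ofReal_mul_I, one_mul]

lemma sum_filter_abs_sub_le_le_integral_norm_charFun {α : Type*} [Fintype α] {w : α → ℝ}
    (hw : ∀ a, 0 ≤ w a) (X : α → ℝ) (z : ℝ) {ε : ℝ} (hε : 0 < ε) :
    ∑ a with |X a - z| ≤ ε / 3, w a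
      ≤ 2 * ∫ t in (0 : ℝ)..2, ‖∑ a, (w a : ℂ) * cexp (↑(t / ε * X a) * I)‖ := by
  set u : α → ℝ := fun a => (X a - z) / ε
  have hkernel : ∑ a with |X a - z| ≤ ε / 3, w a ≤ ∑ a, 2 * (w a * fejerKernel (u a)) := by
    rw [Finset.sum_filter]
    refine Finset.sum_le_sum fun a _ => ?_
    split_ifs with h
    · have : |u a| ≤ 1 / 3 := by
        rw [abs_div, abs_of_pos hε, div_le_iff₀ hε]; linarith
      nlinarith [hw a, one_half_le_fejerKernel this]
    · have := mul_nonneg (hw a) (fejerKernel_nonneg (u a))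
      linarith
  have hintegral : ∑ a, 2 * (w a * fejerKernel (u a))
      = 2 * ∫ t in (0 : ℝ)..2, ∑ a, w a * ((1 - t / 2) * cos (t * u a)) := by
    rw [← Finset.mul_sum, intervalIntegral.integral_finsetSum
      fun a _ => (Continuous.intervalIntegrable (by fun_prop) 0 2)]
    simp only [intervalIntegral.integral_const_mul, fejerKernel]
  have hpointwise : ∀ t ∈ Set.Icc (0 : ℝ) 2, ∑ a, w a * ((1 - t / 2) * cos (t * u a))
      ≤ ‖∑ a, (w a : ℂ) * cexp (↑(t / ε * X a) * I)‖ := by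
    rintro t ⟨ht0, ht2⟩
    have hre : ∑ a, w a * cos (t * u a)
        = (∑ a, (w a : ℂ) * cexp (↑(t / ε * (X a - z)) * I)).re := by
      simp only [Complex.re_sum, Complex.re_ofReal_mul, Complex.exp_ofReal_mul_I_re]
      congr! 3
      ring
    calc ∑ a, w a * ((1 - t / 2) * cos (t * u a))
        = (1 - t / 2) * ∑ a, w a * cos (t * u a) := by
          rw [Finset.mul_sum]; congr! 1; ring
      _ ≤ (1 - t / 2) * ‖∑ a, (w a : ℂ) * cexp (↑(t / ε * X a) * I)‖ := by
          rw [hre, ← norm_sum_mul_exp_sub _ X _ z]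
          exact mul_le_mul_of_nonneg_left (Complex.re_le_norm _) (by linarith)
      _ ≤ _ := mul_le_of_le_one_left (norm_nonneg _) (by linarith)
  calc ∑ a with |X a - z| ≤ ε / 3, w a ≤ _ := hkernel
    _ = _ := hintegral
    _ ≤ _ := by
      gcongr
      exact intervalIntegral.integral_mono_on zero_le_two
        (Continuous.intervalIntegrable (by fun_prop) 0 2)
        (Continuous.intervalIntegrable (by fun_prop) 0 2) hpointwise

lemma intervalIntegral_exp_neg_mul_sq_le {c : ℝ} (hc : 0 < c) {a b : ℝ} (hab : a ≤ b) :
    ∫ t in a..b, exp (-c * t ^ 2) ≤ √(π / c) := by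
  rw [← integral_gaussian c, intervalIntegral.integral_of_le hab]
  exact MeasureTheory.setIntegral_le_integral (integrable_exp_neg_mul_sq hc)
    (Filter.Eventually.of_forall fun x => (exp_pos _).le)

noncomputable def bernoulliCharFun (p θ : ℝ) : ℂ := 1 - p + p * cexp (θ * I)

lemma norm_bernoulliCharFun_sq (p θ : ℝ) :
    ‖bernoulliCharFun p θ‖ ^ 2 = 1 - 2 * p * (1 - p) * (1 - cos θ) := by
  have hparts : bernoulliCharFun p θ = ↑(1 - p + p * cos θ) + ↑(p * sin θ) * I := by
    rw [bernoulliCharFun, Complex.exp_mul_I, ← Complex.ofReal_cos, ← Complex.ofReal_sin]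
    push_cast
    ring
  rw [hparts, Complex.sq_norm, Complex.normSq_add_mul_I]
  linear_combination p ^ 2 * sin_sq_add_cos_sq θ

lemma norm_bernoulliCharFun_le_one {p : ℝ} (hp0 : 0 ≤ p) (hp1 : p ≤ 1) (θ : ℝ) :
    ‖bernoulliCharFun p θ‖ ≤ 1 := by
  refine (sq_le_one_iff₀ (norm_nonneg _)).1 ?_
  rw [norm_bernoulliCharFun_sq]
  nlinarith [mul_nonneg (mul_nonneg hp0 (sub_nonneg.2 hp1)) (sub_nonneg.2 (cos_le_one θ))]

lemma norm_bernoulliCharFun_le_exp {p : ℝ} (hp0 : 0 ≤ p) (hp1 : p ≤ 1 / 2) {θ : ℝ}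
    (hθ : |θ| ≤ 2) : ‖bernoulliCharFun p θ‖ ≤ exp (-(p * θ ^ 2 / 16)) := by
  have hcos : θ ^ 2 / 8 ≤ 1 - cos θ := by
    have hπ : 1 / 8 ≤ 2 / π ^ 2 := by
      rw [div_le_div_iff₀ (by norm_num) (by positivity)]
      nlinarith [pi_le_four, pi_pos]
    nlinarith [cos_le_one_sub_mul_cos_sq (hθ.trans two_le_pi),
      mul_le_mul_of_nonneg_right hπ (sq_nonneg θ)]
  have hsq : ‖bernoulliCharFun p θ‖ ^ 2 ≤ exp (-(p * θ ^ 2 / 16)) ^ 2 := by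
    rw [norm_bernoulliCharFun_sq, ← exp_nat_mul,
      show (2 : ℕ) * -(p * θ ^ 2 / 16) = -(p * θ ^ 2 / 8) by push_cast; ring]
    have h12p : 0 ≤ p * (1 - 2 * p) * (1 - cos θ) :=
      mul_nonneg (mul_nonneg hp0 (by linarith)) (sub_nonneg.2 (cos_le_one θ))
    nlinarith [add_one_le_exp (-(p * θ ^ 2 / 8)), mul_le_mul_of_nonneg_left hcos hp0]
  exact (pow_le_pow_iff_left₀ (norm_nonneg _) (exp_pos _).le two_ne_zero).1 hsq

lemma norm_prod_bernoulliCharFun_le {ι : Type*} [Fintype ι] [DecidableEq ι] {p : ℝ}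
    (hp0 : 0 ≤ p) (hp1 : p ≤ 1 / 2) {T : Finset ι} {b : ι → ℝ} (hb : ∀ j ∉ T, |b j| ≤ 2) :
    ‖∏ j, bernoulliCharFun p (b j)‖ ≤ exp (-(p / 16 * ∑ j ∈ Tᶜ, b j ^ 2)) := by
  rw [norm_prod, ← Finset.prod_mul_prod_compl T]
  calc (∏ j ∈ T, ‖bernoulliCharFun p (b j)‖) * ∏ j ∈ Tᶜ, ‖bernoulliCharFun p (b j)‖
      ≤ 1 * ∏ j ∈ Tᶜ, exp (-(p * b j ^ 2 / 16)) := by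
        gcongr with j hj
        · exact Finset.prod_le_one (fun j _ => norm_nonneg _)
            fun j _ => norm_bernoulliCharFun_le_one hp0 (by linarith) _
        · exact norm_bernoulliCharFun_le_exp hp0 hp1 (hb j (Finset.mem_compl.1 hj))
    _ = exp (-(p / 16 * ∑ j ∈ Tᶜ, b j ^ 2)) := by
        rw [one_mul, ← exp_sum, Finset.mul_sum, ← Finset.sum_neg_distrib]
        congr! 2
        ring

section Bernoulli

variable {ι : Type*} [Fintype ι]

def berWeight (p : ℝ) (f : ι → Bool) : ℝ := ∏ i, if f i then p else 1 - p

def boolVec (f : ι → Bool) : ι → ℝ := fun i => if f i then 1 else 0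

lemma berWeight_nonneg {p : ℝ} (hp0 : 0 ≤ p) (hp1 : p ≤ 1) (f : ι → Bool) :
    0 ≤ berWeight p f :=
  Finset.prod_nonneg fun i _ => by split_ifs <;> linarith

variable [DecidableEq ι]

lemma berProb_eq_sum_filter (p : ℝ) (E : (ι → ℝ) → Prop) :
    berProb p E = ∑ f with E (boolVec f), berWeight p f :=
  (Finset.sum_filter _ _).symm

lemma berProb_mono {p : ℝ} (hp0 : 0 ≤ p) (hp1 : p ≤ 1) {E F : (ι → ℝ) → Prop}
    (hEF : ∀ v, E v → F v) : berProb p E ≤ berProb p F := by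
  rw [berProb_eq_sum_filter, berProb_eq_sum_filter]
  exact Finset.sum_le_sum_of_subset_of_nonneg
    (Finset.monotone_filter_right _ fun f _ => hEF _) fun f _ _ => berWeight_nonneg hp0 hp1 f

lemma sum_berWeight_mul_exp_eq_prod (p : ℝ) (a : ι → ℝ) (s : ℝ) :
    ∑ f : ι → Bool, (berWeight p f : ℂ) * cexp (↑(s * ∑ j, a j * boolVec f j) * I)
      = ∏ j, bernoulliCharFun p (s * a j) := by
  have hfactor : ∀ f : ι → Bool,
      (berWeight p f : ℂ) * cexp (↑(s * ∑ j, a j * boolVec f j) * I)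
        = ∏ j, if f j then (p : ℂ) * cexp (↑(s * a j) * I) else ↑(1 - p) := by
    intro f
    simp only [berWeight, boolVec, Finset.mul_sum, Complex.ofReal_sum, Finset.sum_mul,
      Complex.exp_sum, Complex.ofReal_prod, ← Finset.prod_mul_distrib]
    refine Finset.prod_congr rfl fun j _ => ?_
    split_ifs <;> simp
  simp_rw [hfactor]
  rw [← Fintype.prod_sum fun j (b : Bool) =>
    if b then (p : ℂ) * cexp (↑(s * a j) * I) else ↑(1 - p)]
  refine Finset.prod_congr rfl fun j _ => ?_
  simp [bernoulliCharFun, add_comm]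

lemma berProb_abs_sum_mul_sub_le {p : ℝ} (hp0 : 0 < p) (hp1 : p ≤ 1 / 2) {a : ι → ℝ}
    {T : Finset ι} {ε : ℝ} (hε : 0 < ε) (ha : ∀ j ∉ T, |a j| ≤ ε)
    (hS : 0 < ∑ j ∈ Tᶜ, a j ^ 2) (z : ℝ) :
    berProb p (fun v => |∑ j, a j * v j - z| ≤ ε / 3)
      ≤ 8 * ε * √(π / (p * ∑ j ∈ Tᶜ, a j ^ 2)) := by
  set S := ∑ j ∈ Tᶜ, a j ^ 2
  set c := p * S / (16 * ε ^ 2)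
  have hc : 0 < c := by positivity
  have hchar : ∀ t ∈ Set.Icc (0 : ℝ) 2, ‖∑ f : ι → Bool,
      (berWeight p f : ℂ) * cexp (↑(t / ε * ∑ j, a j * boolVec f j) * I)‖
        ≤ exp (-c * t ^ 2) := by
    rintro t ⟨ht0, ht2⟩
    rw [sum_berWeight_mul_exp_eq_prod]
    refine (norm_prod_bernoulliCharFun_le (T := T) hp0.le hp1 fun j hj => ?_).trans_eq ?_
    · rw [abs_mul, abs_div, abs_of_nonneg ht0, abs_of_pos hε]
      calc t / ε * |a j| ≤ t / ε * ε := by gcongr; exact ha j hj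
        _ = t := div_mul_cancel₀ t hε.ne'
        _ ≤ 2 := ht2
    · congr 1
      simp only [mul_pow, ← Finset.mul_sum, c, S]
      field_simp
  calc berProb p (fun v => |∑ j, a j * v j - z| ≤ ε / 3)
      = ∑ f with |∑ j, a j * boolVec f j - z| ≤ ε / 3, berWeight p f :=
        berProb_eq_sum_filter _ _
    _ ≤ 2 * ∫ t in (0 : ℝ)..2, ‖∑ f : ι → Bool,
          (berWeight p f : ℂ) * cexp (↑(t / ε * ∑ j, a j * boolVec f j) * I)‖ :=
        sum_filter_abs_sub_le_le_integral_norm_charFun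
          (fun f => berWeight_nonneg hp0.le (by linarith) f) _ z hε
    _ ≤ 2 * ∫ t in (0 : ℝ)..2, exp (-c * t ^ 2) := by
        gcongr
        exact intervalIntegral.integral_mono_on zero_le_two
          (Continuous.intervalIntegrable (by fun_prop) 0 2)
          (Continuous.intervalIntegrable (by fun_prop) 0 2) hchar
    _ ≤ 2 * √(π / c) := by gcongr; exact intervalIntegral_exp_neg_mul_sq_le hc zero_le_two
    _ = 8 * ε * √(π / (p * S)) := by
        rw [show π / c = (4 * ε) ^ 2 * (π / (p * S)) by simp only [c]; field_simp; ring,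
          sqrt_mul (by positivity), sqrt_sq (by positivity)]
        ring

end Bernoulli

lemma abs_le_enorm2 {N : Type*} [Fintype N] (x : N → ℝ) (i : N) : |x i| ≤ enorm2 x := by
  rw [enorm2, ← sqrt_sq_eq_abs]
  exact sqrt_le_sqrt (Finset.single_le_sum (fun j _ => sq_nonneg (x j)) (Finset.mem_univ i))

lemma eight_mul_sqrt_le_two_zpow_neg {p S : ℝ} (hp : 0 < p) {k : ℕ}
    (hS : (4 : ℝ) ^ (-(k : ℤ)) ≤ S) :
    8 * ((5 : ℝ) ^ (-(k : ℤ)) * √p / 100) * √(π / (p * S)) ≤ (2 : ℝ) ^ (-(k : ℤ)) := by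
  have h4 : (4 : ℝ) ^ k = (2 ^ k) ^ 2 := by rw [← pow_mul, pow_mul']; norm_num
  have h5 : ((2 : ℝ) ^ k) ^ 2 ≤ 5 ^ k := h4 ▸ pow_le_pow_left₀ (by norm_num) (by norm_num) k
  simp only [zpow_neg, zpow_natCast, h4] at hS ⊢
  set A : ℝ := 2 ^ k
  have hA : 0 < A := by positivity
  have hS0 : 0 < S := lt_of_lt_of_le (by positivity) hS
  have hsqrt : √p * √(π / (p * S)) ≤ 2 * A := by
    rw [← sqrt_mul hp.le, show p * (π / (p * S)) = π / S by field_simp,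
      ← sqrt_sq (by positivity : 0 ≤ 2 * A)]
    refine sqrt_le_sqrt ?_
    rw [div_le_iff₀ hS0]
    rw [inv_le_iff_one_le_mul₀ (by positivity)] at hS
    nlinarith [pi_le_four]
  calc 8 * ((5 ^ k)⁻¹ * √p / 100) * √(π / (p * S))
      = 8 / 100 * (5 ^ k)⁻¹ * (√p * √(π / (p * S))) := by ring
    _ ≤ 8 / 100 * (5 ^ k)⁻¹ * (2 * A) := by gcongr
    _ ≤ A⁻¹ := by
      field_simp
      nlinarith

/-- Case I of the key lemma, with C the absolute constant from the
Kolmogorov–Lévy–Rogozin inequality. -/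
theorem stmt2 :
    ∃ C : ℝ, 0 < C ∧
      ∀ (p : ℝ), p ∈ Set.Ioc (0 : ℝ) (1 / 2) → ∀ (k n : ℕ), 1 ≤ k →
      ∀ (M : Matrix (Fin k) (Fin n) ℝ), M * Mᵀ = 1 →
      ∀ (T : Finset (Fin n)),
        (∀ i : Fin k, ∀ j ∉ T, |M i j| ≤ (5 : ℝ) ^ (-(k : ℤ)) * Real.sqrt p / C) →
        (∃ i : Fin k, (4 : ℝ) ^ (-(k : ℤ)) ≤ ∑ j ∈ Tᶜ, (M i j) ^ 2) →
        levy p (fun v => M.mulVec v) ((5 : ℝ) ^ (-(k : ℤ)) * Real.sqrt p / (3 * C))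
          ≤ (2 : ℝ) ^ (-(k : ℤ)) := by
  refine ⟨100, by norm_num, ?_⟩
  rintro p ⟨hp0, hp1⟩ k n - M - T hT ⟨i, hi⟩
  set ε : ℝ := (5 : ℝ) ^ (-(k : ℤ)) * √p / 100
  have hε : 0 < ε := by positivity
  have hS : 0 < ∑ j ∈ Tᶜ, M i j ^ 2 := lt_of_lt_of_le (by positivity) hi
  rw [show (5 : ℝ) ^ (-(k : ℤ)) * √p / (3 * 100) = ε / 3 by ring, levy]
  refine Real.iSup_le (fun z => ?_) (by positivity)
  calc berProb p (fun v => enorm2 (fun i' => M.mulVec v i' - z i') ≤ ε / 3)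
      ≤ berProb p (fun v => |∑ j, M i j * v j - z i| ≤ ε / 3) :=
        berProb_mono hp0.le (by linarith) fun v hv => (abs_le_enorm2 _ i).trans hv
    _ ≤ 8 * ε * √(π / (p * ∑ j ∈ Tᶜ, M i j ^ 2)) :=
        berProb_abs_sum_mul_sub_le hp0 hp1 hε (hT i) hS (z i)
    _ ≤ (2 : ℝ) ^ (-(k : ℤ)) := eight_mul_sqrt_le_two_zpow_neg hp0 hi
end

section
/- (Restricted invertibility, Gluskin–Olevskii form) Let $U$ be an $n\times m$ real matrix of rank $n$ (so $m\ge n$). Then there exists a subset $\mathcal{S}\subseteq[m]$ of columns with $|\mathcal{S}|=n$ such that $U_{\mathcal{S}}$ is invertible and $\|U_{\mathcal{S}}^{-1}\|_{\operatorname{HS}}^2 \le (m-n+1)\cdot\operatorname{Tr}[(UU^T)^{-1}]$. -/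
open scoped BigOperators Matrix Matrix.Norms.L2Operator

attribute [local instance] Classical.propDecidable

/-!
Weight each column tuple `f : Fin n → Fin m` by `det (U_f)²`; by Cauchy–Binet the weights add
up to `n! · det (U Uᵀ)`. Since `det (U_f)² · ‖U_f⁻¹‖²_HS = ‖adj U_f‖²_HS` and the entries of
`adj U_f` are `(n-1)`-minors of `U`, the weighted sum of `‖U_f⁻¹‖²_HS` counts each `(n-1)`-minor
once for each of the `m - n + 1` columns that extend it injectively, and Cauchy–Binet for `U`
with one row deleted turns this into `(m - n + 1) · n! · tr adj (U Uᵀ)`. So the weighted average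
of `‖U_f⁻¹‖²_HS` is at most `(m - n + 1) · tr (U Uᵀ)⁻¹`, and some tuple of positive weight does
no worse.
-/

open Matrix Finset Equiv

theorem Fin.insertNth_injective_iff {N : ℕ} {α : Type*} {p : Fin (N + 1)} {c : α}
    {h : Fin N → α} :
    Function.Injective (Fin.insertNth p c h) ↔ c ∉ Set.range h ∧ Function.Injective h := by
  refine ⟨fun hinj => ⟨?_, ?_⟩, fun ⟨hc, hh⟩ => ?_⟩
  · rintro ⟨j, hj⟩
    refine Fin.succAbove_ne p j (hinj ?_)
    simp [hj]
  · simpa [Function.comp_def] using hinj.comp (Fin.succAbove_right_injective (p := p))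
  · intro a b hab
    induction a using Fin.succAboveCases p <;> induction b using Fin.succAboveCases p <;>
      simp_all [eq_comm, hh.eq_iff]

theorem Fin.sum_injective_comp_succAbove {N : ℕ} {α R : Type*} [Fintype α] [CommRing R]
    (p : Fin (N + 1)) (G : (Fin N → α) → R) (hG : ∀ h, ¬ Function.Injective h → G h = 0) :
    ∑ f : Fin (N + 1) → α with Function.Injective f, G (f ∘ p.succAbove)
      = ((Fintype.card α : R) - N) * ∑ h, G h := by
  rw [sum_filter, ← (Fin.insertNthEquiv (fun _ => α) p).sum_comp, Fintype.sum_prod_type, sum_comm,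
    mul_sum]
  refine sum_congr rfl fun h _ => ?_
  simp only [Fin.insertNthEquiv, Equiv.coe_fn_mk, Fin.insertNth_comp_succAbove,
    Fin.insertNth_injective_iff]
  by_cases hh : Function.Injective h
  · have hN : N ≤ Fintype.card α := by simpa using Fintype.card_le_of_injective h hh
    have hcompl : ({c | c ∉ Set.range h} : Finset α) = (univ.image h)ᶜ := by ext; simp
    rw [← sum_filter, Finset.sum_const, nsmul_eq_mul]
    simp only [hh, and_true, hcompl, card_compl, card_image_of_injective _ hh, card_univ,
      Fintype.card_fin, Nat.cast_sub hN]
  · simp [hG h hh]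

theorem Finset.exists_pos_weight_le_of_sum_mul_le {ι : Type*} [Fintype ι] {w x : ι → ℝ} {C : ℝ}
    (hw : ∀ i, 0 ≤ w i) (hpos : 0 < ∑ i, w i) (h : ∑ i, w i * x i ≤ C * ∑ i, w i) :
    ∃ i, 0 < w i ∧ x i ≤ C := by
  by_contra! hx
  obtain ⟨i₀, -, hi₀⟩ := exists_lt_of_sum_lt (f := 0) (g := w) (s := univ) (by simpa using hpos)
  refine h.not_gt ?_
  rw [mul_sum]
  refine sum_lt_sum (fun i _ => ?_) ⟨i₀, mem_univ _, ?_⟩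
  · rcases (hw i).eq_or_lt with h0 | hpos
    · simp [← h0]
    · rw [mul_comm]
      exact mul_le_mul_of_nonneg_left (hx i hpos).le (hw i)
  · rw [mul_comm]
    exact mul_lt_mul_of_pos_left (hx i₀ hi₀) hi₀

namespace Matrix

theorem isUnit_of_rank_eq_card {m K : Type*} [Fintype m] [DecidableEq m] [Field K]
    {A : Matrix m m K} (h : A.rank = Fintype.card m) : IsUnit A := by
  rw [← mulVec_surjective_iff_isUnit, ← coe_mulVecLin, ← LinearMap.range_eq_top]
  exact Submodule.eq_top_of_finrank_eq (by simpa [Matrix.rank] using h)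

theorem sum_sq_inv_eq {n K : Type*} [Fintype n] [DecidableEq n] [Field K] (M : Matrix n n K) :
    ∑ i, ∑ j, M⁻¹ i j ^ 2 = (M.det ^ 2)⁻¹ * ∑ i, ∑ j, M.adjugate i j ^ 2 := by
  simp only [inv_def, Ring.inverse_eq_inv, smul_apply, smul_eq_mul, mul_pow, inv_pow, mul_sum]

section CauchyBinet

variable {n k R : Type*} [Fintype n] [DecidableEq n] [CommRing R]

theorem det_submatrix_eq_zero_of_not_injective (A : Matrix n k R) {f : n → k}
    (hf : ¬ Function.Injective f) : (A.submatrix id f).det = 0 := by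
  obtain ⟨a, b, hab, hne⟩ := Function.not_injective_iff.mp hf
  exact det_zero_of_column_eq hne fun r => by simp [hab]

variable [Fintype k]

theorem det_mul_eq_sum_det_submatrix_mul_prod (A : Matrix n k R) (B : Matrix k n R) :
    (A * B).det = ∑ p : n → k, (A.submatrix id p).det * ∏ i, B (p i) i := by
  simp only [det_apply', mul_apply, prod_univ_sum, mul_sum, Fintype.piFinset_univ, sum_mul]
  rw [sum_comm]
  refine sum_congr rfl fun p _ => sum_congr rfl fun σ _ => ?_
  simp only [submatrix_apply, id_eq, prod_mul_distrib, mul_assoc]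

theorem sum_det_submatrix_sq (U : Matrix n k R) :
    ∑ f : n → k, (U.submatrix id f).det ^ 2 = (Fintype.card n).factorial * (U * Uᵀ).det := by
  have hσ (σ : Perm n) :
      ∑ f : n → k, (Perm.sign σ : R) * (∏ i, U (σ i) (f i)) * (U.submatrix id f).det
        = (U * Uᵀ).det := by
    have hsign : (Perm.sign σ : R) * Perm.sign σ = 1 := by
      rw [← Int.cast_mul, ← Units.val_mul, Int.units_mul_self, Units.val_one, Int.cast_one]
    calc _ = ∑ f : n → k, (Perm.sign σ : R) * (∏ i, U (σ i) (f (σ i))) *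
          (U.submatrix id (f ∘ σ)).det :=
          (Equiv.sum_comp (Equiv.arrowCongr σ.symm (Equiv.refl k)) _).symm
      _ = (U * Uᵀ).det := by
        rw [det_mul_eq_sum_det_submatrix_mul_prod]
        refine sum_congr rfl fun f _ => ?_
        rw [Equiv.prod_comp σ (fun i => U i (f i)),
          show U.submatrix id (f ∘ σ) = (U.submatrix id f).submatrix id σ from rfl, det_permute']
        simp only [transpose_apply]
        linear_combination (∏ i, U i (f i)) * (U.submatrix id f).det * hsign
  calc ∑ f : n → k, (U.submatrix id f).det ^ 2
      = ∑ σ : Perm n, ∑ f : n → k, (Perm.sign σ : R) * (∏ i, U (σ i) (f i)) *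
          (U.submatrix id f).det := by
        rw [sum_comm]
        refine sum_congr rfl fun f _ => ?_
        rw [sq, ← sum_mul]
        congr 1
        simp only [det_apply', submatrix_apply, id_eq]
    _ = (Fintype.card n).factorial * (U * Uᵀ).det := by
        simp only [hσ, Finset.sum_const, card_univ, Fintype.card_perm, nsmul_eq_mul]

end CauchyBinet

section Adjugate

variable {k R : Type*} [CommRing R] {N : ℕ}

theorem trace_adjugate_mul_transpose [Fintype k] (U : Matrix (Fin (N + 1)) k R) :
    (U * Uᵀ).adjugate.trace
      = ∑ j : Fin (N + 1), (U.submatrix j.succAbove id * (U.submatrix j.succAbove id)ᵀ).det := by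
  refine sum_congr rfl fun j _ => ?_
  rw [diag_apply, adjugate_fin_succ_eq_det_submatrix, Even.neg_one_pow ⟨j, rfl⟩, one_mul]
  rfl

theorem sum_sq_adjugate_submatrix (U : Matrix (Fin (N + 1)) k R) (f : Fin (N + 1) → k) :
    ∑ i, ∑ j, (U.submatrix id f).adjugate i j ^ 2
      = ∑ i : Fin (N + 1), ∑ j : Fin (N + 1),
          ((U.submatrix j.succAbove id).submatrix id (f ∘ i.succAbove)).det ^ 2 := by
  simp only [adjugate_fin_succ_eq_det_submatrix, mul_pow, ← pow_mul, pow_mul', neg_one_sq,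
    one_pow, one_mul]
  rfl

theorem sum_injective_sum_sq_adjugate_submatrix [Fintype k] (U : Matrix (Fin (N + 1)) k R) :
    ∑ f : Fin (N + 1) → k with Function.Injective f, ∑ i, ∑ j, (U.submatrix id f).adjugate i j ^ 2
      = ((Fintype.card k : R) - N) * (N + 1).factorial * (U * Uᵀ).adjugate.trace := by
  have hG (j : Fin (N + 1)) (h : Fin N → k) (hh : ¬ Function.Injective h) :
      ((U.submatrix j.succAbove id).submatrix id h).det ^ 2 = 0 := by
    rw [det_submatrix_eq_zero_of_not_injective _ hh, zero_pow two_ne_zero]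
  calc _ = ∑ i : Fin (N + 1), ∑ j : Fin (N + 1), ∑ f : Fin (N + 1) → k with Function.Injective f,
        ((U.submatrix j.succAbove id).submatrix id (f ∘ i.succAbove)).det ^ 2 := by
        simp only [sum_sq_adjugate_submatrix]
        rw [sum_comm]
        exact sum_congr rfl fun i _ => sum_comm
    _ = ∑ i : Fin (N + 1), ∑ j : Fin (N + 1), ((Fintype.card k : R) - N) * (N.factorial *
          (U.submatrix j.succAbove id * (U.submatrix j.succAbove id)ᵀ).det) := by
        refine sum_congr rfl fun i _ => sum_congr rfl fun j _ => ?_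
        rw [Fin.sum_injective_comp_succAbove i _ (hG j), sum_det_submatrix_sq, Fintype.card_fin]
    _ = _ := by
        rw [trace_adjugate_mul_transpose, Finset.sum_const, card_univ, Fintype.card_fin, ← mul_sum,
          ← mul_sum, nsmul_eq_mul, Nat.factorial_succ]
        push_cast
        ring

end Adjugate

theorem sum_det_sq_mul_sum_sq_inv_le {k : Type*} [Fintype k] {N : ℕ}
    (U : Matrix (Fin (N + 1)) k ℝ) (hU : (U * Uᵀ).det ≠ 0) :
    ∑ f : Fin (N + 1) → k, (U.submatrix id f).det ^ 2 * ∑ i, ∑ j, (U.submatrix id f)⁻¹ i j ^ 2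
      ≤ ((Fintype.card k : ℝ) - N) * (U * Uᵀ)⁻¹.trace *
          ∑ f : Fin (N + 1) → k, (U.submatrix id f).det ^ 2 := by
  calc _ ≤ ∑ f : Fin (N + 1) → k with Function.Injective f,
        ∑ i, ∑ j, (U.submatrix id f).adjugate i j ^ 2 := by
        rw [sum_filter]
        refine sum_le_sum fun f _ => ?_
        rw [sum_sq_inv_eq, ← mul_assoc]
        split_ifs with hf
        · exact mul_le_of_le_one_left (by positivity) mul_inv_le_one
        · simp [det_submatrix_eq_zero_of_not_injective U hf]
    _ = ((Fintype.card k : ℝ) - N) * (N + 1).factorial * (U * Uᵀ).adjugate.trace :=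
        sum_injective_sum_sq_adjugate_submatrix U
    _ = _ := by
        rw [sum_det_submatrix_sq, Fintype.card_fin, inv_def, trace_smul, Ring.inverse_eq_inv,
          smul_eq_mul]
        field_simp

end Matrix

/-- restricted invertibility (Gluskin–Olevskii). -/
theorem stmt4 (n m : ℕ) (U : Matrix (Fin n) (Fin m) ℝ) (hrank : U.rank = n) :
    ∃ g : Fin n → Fin m, Function.Injective g ∧
      IsUnit (U.submatrix id g) ∧
      ∑ i, ∑ j, ((U.submatrix id g)⁻¹ i j) ^ 2
        ≤ ((m : ℝ) - n + 1) * (U * Uᵀ)⁻¹.trace := by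
  obtain _ | N := n
  · exact ⟨finZeroElim, fun i => i.elim0, isUnit_of_subsingleton _, by simp⟩
  have hdet : (U * Uᵀ).det ≠ 0 := ((isUnit_iff_isUnit_det _).mp (isUnit_of_rank_eq_card
    (by rw [rank_self_mul_transpose, hrank, Fintype.card_fin]))).ne_zero
  have hweight : 0 < ∑ f : Fin (N + 1) → Fin m, (U.submatrix id f).det ^ 2 := by
    refine (sum_nonneg fun f _ => sq_nonneg _).lt_of_ne fun h => hdet ?_
    rwa [sum_det_submatrix_sq, eq_comm, mul_eq_zero, or_iff_right (by positivity)] at h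
  obtain ⟨g, hg_pos, hle⟩ := exists_pos_weight_le_of_sum_mul_le (fun f => sq_nonneg _) hweight
    (sum_det_sq_mul_sum_sq_inv_le U hdet)
  have hg : (U.submatrix id g).det ≠ 0 := fun h => by simp [h] at hg_pos
  refine ⟨g, not_imp_comm.mp (det_submatrix_eq_zero_of_not_injective U) hg,
    (isUnit_iff_isUnit_det _).mpr hg.isUnit, hle.trans_eq ?_⟩
  simp only [Fintype.card_fin]
  push_cast
  ring
end

section
/- Let $R_1,\dots,R_{m}$ be independent $\mathbb{R}^n$-valued random vectors, let $V$ be an $n\times k$ matrix, and suppose $\mathbb{P}[\|R_iV\|_2\le\theta]\le q$ for all $i$ and some $\theta>0$, $q\in(0,1)$. Let $M$ be the $m\times n$ matrix with rows $R_i$. Then for any $0<\epsilon'<1$, $\mathbb{P}[\|MV\|_{\operatorname{HS}}\le\theta\sqrt{\epsilon' m}]\le \binom{m}{\lfloor\epsilon' m\rfloor}\cdot(m+1)\cdot q^{(1-\epsilon')m}$. -/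
open scoped BigOperators Matrix Matrix.Norms.L2Operator

attribute [local instance] Classical.propDecidable

open MeasureTheory ProbabilityTheory
open scoped ENNReal

/-!
If `‖MV‖_HS ≤ θ √(ε' m)`, then at most `⌊ε' m⌋` rows have `‖R_i V‖₂ > θ` (each such row
contributes more than `θ²` to `‖MV‖_HS²`), so some `m - ⌊ε' m⌋` rows all have `‖R_i V‖₂ ≤ θ`.
By independence a fixed set of that many rows is small with probability at most
`q ^ (m - ⌊ε' m⌋) ≤ q ^ ((1 - ε') m)`, and a union bound over the `m.choose ⌊ε' m⌋` sets of rows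
gives the claim.
-/

open Finset

lemma enorm2_sq {N : Type*} [Fintype N] (x : N → ℝ) : enorm2 x ^ 2 = ∑ i, x i ^ 2 :=
  Real.sq_sqrt (sum_nonneg fun i _ => sq_nonneg (x i))

lemma sum_sq_mul_eq_sum_enorm2_vecMul_sq {l m n : Type*} [Fintype l] [Fintype m] [Fintype n]
    (M : Matrix l m ℝ) (V : Matrix m n ℝ) :
    ∑ i, ∑ j, (M * V) i j ^ 2 = ∑ i, enorm2 (Matrix.vecMul (M i) V) ^ 2 := by
  simp only [enorm2_sq]
  rfl

lemma card_lt_le_floor_of_sum_sq_le {ι : Type*} [Fintype ι] (g : ι → ℝ) {θ c : ℝ} (hθ : 0 < θ)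
    (h : ∑ i, g i ^ 2 ≤ θ ^ 2 * c) : #{i | θ < g i} ≤ ⌊c⌋₊ := by
  refine Nat.le_floor (le_of_mul_le_mul_right ?_ (pow_pos hθ 2))
  calc (#{i | θ < g i} : ℝ) * θ ^ 2 ≤ ∑ i ∈ {i | θ < g i}, g i ^ 2 := by
        rw [← nsmul_eq_mul]
        exact card_nsmul_le_sum _ _ _ fun i hi => by nlinarith [(mem_filter.1 hi).2]
    _ ≤ ∑ i, g i ^ 2 := sum_le_sum_of_subset_of_nonneg (subset_univ _) fun i _ _ => sq_nonneg _
    _ ≤ c * θ ^ 2 := by linarith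

lemma exists_card_eq_forall_le_of_sum_sq_le {ι : Type*} [Fintype ι] (g : ι → ℝ) {θ c : ℝ}
    (hθ : 0 < θ) (h : ∑ i, g i ^ 2 ≤ θ ^ 2 * c) :
    ∃ S : Finset ι, #S = Fintype.card ι - ⌊c⌋₊ ∧ ∀ i ∈ S, g i ≤ θ := by
  have hcompl : Fintype.card ι - ⌊c⌋₊ ≤ #(univ.filter (fun i => θ < g i))ᶜ := by
    rw [card_compl]
    exact Nat.sub_le_sub_left (card_lt_le_floor_of_sum_sq_le g hθ h) _
  obtain ⟨S, hS, hcard⟩ := exists_subset_card_eq hcompl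
  exact ⟨S, hcard, fun i hi => by simpa using hS hi⟩

lemma measure_exists_card_eq_forall_mem_le {Ω ι β : Type*} [MeasurableSpace Ω]
    [MeasurableSpace β] [Fintype ι] {μ : Measure Ω} {R : ι → Ω → β} (hindep : iIndepFun R μ)
    {C : Set β} (hC : MeasurableSet C) {q : ℝ≥0∞} (hq : ∀ i, μ (R i ⁻¹' C) ≤ q) (t : ℕ) :
    μ {ω | ∃ S : Finset ι, #S = t ∧ ∀ i ∈ S, R i ω ∈ C}
      ≤ (Fintype.card ι).choose t * q ^ t := by
  have hunion : {ω | ∃ S : Finset ι, #S = t ∧ ∀ i ∈ S, R i ω ∈ C}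
      = ⋃ S ∈ powersetCard t univ, ⋂ i ∈ S, R i ⁻¹' C := by
    ext ω
    simp
  calc _ = μ (⋃ S ∈ powersetCard t univ, ⋂ i ∈ S, R i ⁻¹' C) := by rw [hunion]
    _ ≤ ∑ S ∈ powersetCard t univ, μ (⋂ i ∈ S, R i ⁻¹' C) := measure_biUnion_finset_le _ _
    _ ≤ ∑ S ∈ powersetCard t univ, q ^ t := sum_le_sum fun S hS => by
        rw [hindep.meas_biInter fun i _ => ⟨C, hC, rfl⟩, ← (mem_powersetCard.1 hS).2,
          ← prod_const]
        exact prod_le_prod' fun i _ => hq i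
    _ = _ := by rw [sum_const, card_powersetCard, card_univ, nsmul_eq_mul]

lemma ENNReal.pow_sub_floor_mul_le_rpow {q : ℝ≥0∞} (hq : q ≤ 1) (m : ℕ) {ε : ℝ} (hε0 : 0 ≤ ε)
    (hε1 : ε ≤ 1) : q ^ (m - ⌊ε * m⌋₊) ≤ q ^ ((1 - ε) * m : ℝ) := by
  have hfloor : ⌊ε * m⌋₊ ≤ m := Nat.floor_le_of_le (by nlinarith [m.cast_nonneg (α := ℝ)])
  rw [← ENNReal.rpow_natCast, Nat.cast_sub hfloor]
  have hfloor_le : (⌊ε * m⌋₊ : ℝ) ≤ ε * m := Nat.floor_le (by positivity)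
  exact ENNReal.rpow_le_rpow_of_exponent_ge hq (by nlinarith)

theorem stmt9_general {Ω : Type*} [MeasurableSpace Ω] (μ : Measure Ω)
    (m n k : ℕ) (R : Fin m → Ω → (Fin n → ℝ))
    (hindep : iIndepFun R μ)
    (V : Matrix (Fin n) (Fin k) ℝ) (θ : ℝ) (hθ : 0 < θ)
    (q : ℝ≥0∞) (hq1 : q < 1)
    (hrow : ∀ i, μ {ω | enorm2 (Matrix.vecMul (R i ω) V) ≤ θ} ≤ q)
    (ε' : ℝ) (hε'0 : 0 < ε') (hε'1 : ε' < 1) :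
    μ {ω | Real.sqrt (∑ i, ∑ j, ((Matrix.of (fun a b => R a ω b) * V) i j) ^ 2)
          ≤ θ * Real.sqrt (ε' * m)}
      ≤ (m.choose ⌊ε' * m⌋₊ : ℝ≥0∞) * (m + 1 : ℝ≥0∞) * q ^ ((1 - ε') * m : ℝ) := by
  set C : Set (Fin n → ℝ) := {x | enorm2 (Matrix.vecMul x V) ≤ θ}
  have hC : MeasurableSet C := measurableSet_le (by unfold enorm2; fun_prop) measurable_const
  have hfloor : ⌊ε' * m⌋₊ ≤ m := Nat.floor_le_of_le (by nlinarith [m.cast_nonneg (α := ℝ)])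
  calc _ ≤ μ {ω | ∃ S : Finset (Fin m), #S = m - ⌊ε' * m⌋₊ ∧ ∀ i ∈ S, R i ω ∈ C} := by
        refine measure_mono fun ω hω => ?_
        have hsum : ∑ i, enorm2 (Matrix.vecMul (R i ω) V) ^ 2 ≤ θ ^ 2 * (ε' * m) := by
          have hsq := (Real.sqrt_le_iff.1 hω).2
          rwa [sum_sq_mul_eq_sum_enorm2_vecMul_sq, mul_pow, Real.sq_sqrt (by positivity)] at hsq
        simpa [C] using exists_card_eq_forall_le_of_sum_sq_le _ hθ hsum
    _ ≤ m.choose (m - ⌊ε' * m⌋₊) * q ^ (m - ⌊ε' * m⌋₊) := by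
        simpa using measure_exists_card_eq_forall_mem_le hindep hC hrow _
    _ ≤ m.choose ⌊ε' * m⌋₊ * q ^ ((1 - ε') * m : ℝ) := by
        rw [Nat.choose_symm hfloor]
        gcongr
        exact ENNReal.pow_sub_floor_mul_le_rpow hq1.le m hε'0.le hε'1.le
    _ ≤ _ := by
        rw [mul_assoc]
        gcongr
        exact le_mul_of_one_le_left zero_le le_add_self

/-- tensorization of small-ball probabilities for independent rows. -/
theorem stmt9 {Ω : Type*} [MeasurableSpace Ω] (μ : Measure Ω) [IsProbabilityMeasure μ]
    (m n k : ℕ) (R : Fin m → Ω → (Fin n → ℝ)) (hmeas : ∀ i, Measurable (R i))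
    (hindep : iIndepFun R μ)
    (V : Matrix (Fin n) (Fin k) ℝ) (θ : ℝ) (hθ : 0 < θ)
    (q : ℝ≥0∞) (hq0 : 0 < q) (hq1 : q < 1)
    (hrow : ∀ i, μ {ω | enorm2 (Matrix.vecMul (R i ω) V) ≤ θ} ≤ q)
    (ε' : ℝ) (hε'0 : 0 < ε') (hε'1 : ε' < 1) :
    μ {ω | Real.sqrt (∑ i, ∑ j, ((Matrix.of (fun a b => R a ω b) * V) i j) ^ 2)
          ≤ θ * Real.sqrt (ε' * m)}
      ≤ (m.choose ⌊ε' * m⌋₊ : ℝ≥0∞) * (m + 1 : ℝ≥0∞) * q ^ ((1 - ε') * m : ℝ) :=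
  stmt9_general μ m n k R hindep V θ hθ q hq1 hrow ε' hε'0 hε'1
end
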